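/- arXiv:2211.14828 — 3 statements merged into one kernel-verified Lean document; each statement's English description precedes it below -/
import Mathlib

section
/- (Theorem 1 of the paper.) Let X ∈ ℝ^{n×d}, let Q ∈ ℝ^{n×s} have orthonormal columns (QᵀQ = I_s), and let k be a natural number. Suppose Ŷ ∈ ℝ^{s×d} is a best rank-k approximation of QᵀX, i.e. rank(Ŷ) ≤ k and ‖QᵀX − Ŷ‖_F ≤ ‖QᵀX − Z‖_F for every Z ∈ ℝ^{s×d} with rank(Z) ≤ k. Then for every Z ∈ ℝ^{s×d} with rank(Z) ≤ k, ‖X − QŶ‖_F ≤ ‖X − QZ‖_F; that is, QŶ is the quasi-optimal rank-k approximation of X within the subspace spanned by Q. -/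
/-!
Writing `X - Q Y = (X - Q Qᵀ X) + Q (Qᵀ X - Y)`, the first summand is orthogonal to the range
of `Q` and `Q` is an isometry, so `‖X - Q Y‖² = ‖X - Q Qᵀ X‖² + ‖Qᵀ X - Y‖²` for every `Y`.
Hence minimising `‖X - Q Y‖` over rank-`k` matrices `Y` is the same as minimising `‖Qᵀ X - Y‖`.
-/

open Matrix

/-- Frobenius norm of a real matrix: `‖A‖_F = sqrt (∑ i j, A i j ^ 2)`. -/
noncomputable def frobNorm {m n : Type*} [Fintype m] [Fintype n]
    (A : Matrix m n ℝ) : ℝ :=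
  Real.sqrt (∑ i, ∑ j, (A i j) ^ 2)

section Pythagoras

variable {m n s R : Type*} [Fintype m] [Fintype s] [DecidableEq s]

theorem Matrix.sum_sum_sq_eq_trace_transpose_mul [Fintype n] [CommSemiring R]
    (A : Matrix m n R) :
    ∑ i, ∑ j, A i j ^ 2 = (Aᵀ * A).trace := by
  simp only [trace, diag, mul_apply, transpose_apply, sq]
  exact Finset.sum_comm

theorem Matrix.transpose_mul_sub_mul_transpose_mul [Ring R] {Q : Matrix m s R} (hQ : Qᵀ * Q = 1)
    (X : Matrix m n R) : Qᵀ * (X - Q * (Qᵀ * X)) = 0 := by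
  rw [Matrix.mul_sub, ← Matrix.mul_assoc, hQ, Matrix.one_mul, sub_self]

theorem Matrix.trace_transpose_mul_add_mul_of_orthogonal [Fintype n] [CommSemiring R]
    {Q : Matrix m s R} (hQ : Qᵀ * Q = 1)
    {E : Matrix m n R} (hE : Qᵀ * E = 0) (C : Matrix s n R) :
    ((E + Q * C)ᵀ * (E + Q * C)).trace = (Eᵀ * E).trace + (Cᵀ * C).trace := by
  have hEQ : Eᵀ * Q = 0 := by
    rw [← transpose_transpose (Eᵀ * Q), transpose_mul, transpose_transpose, hE, transpose_zero]
  have hQC : (Q * C)ᵀ * (Q * C) = Cᵀ * C := by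
    rw [transpose_mul, Matrix.mul_assoc, ← Matrix.mul_assoc Qᵀ, hQ, Matrix.one_mul]
  have hcross : Eᵀ * (Q * C) = 0 := by rw [← Matrix.mul_assoc, hEQ, Matrix.zero_mul]
  have hcross' : (Q * C)ᵀ * E = 0 := by
    rw [transpose_mul, Matrix.mul_assoc, hE, Matrix.mul_zero]
  rw [transpose_add, Matrix.add_mul, Matrix.mul_add, Matrix.mul_add, hcross, hcross', hQC,
    add_zero, zero_add, trace_add]

end Pythagoras

section FrobNorm

variable {m n s : Type*} [Fintype m] [Fintype n] [Fintype s] [DecidableEq s]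

theorem frobNorm_nonneg (A : Matrix m n ℝ) : 0 ≤ frobNorm A :=
  Real.sqrt_nonneg _

theorem frobNorm_sq (A : Matrix m n ℝ) : frobNorm A ^ 2 = (Aᵀ * A).trace := by
  rw [frobNorm, Real.sq_sqrt (by positivity), sum_sum_sq_eq_trace_transpose_mul]

theorem frobNorm_sub_mul_sq {Q : Matrix m s ℝ} (hQ : Qᵀ * Q = 1) (X : Matrix m n ℝ)
    (Y : Matrix s n ℝ) :
    frobNorm (X - Q * Y) ^ 2 = frobNorm (X - Q * (Qᵀ * X)) ^ 2 + frobNorm (Qᵀ * X - Y) ^ 2 := by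
  have hsplit : X - Q * Y = (X - Q * (Qᵀ * X)) + Q * (Qᵀ * X - Y) := by
    rw [Matrix.mul_sub]
    abel
  rw [frobNorm_sq, frobNorm_sq, frobNorm_sq, hsplit,
    trace_transpose_mul_add_mul_of_orthogonal hQ (transpose_mul_sub_mul_transpose_mul hQ X)]

end FrobNorm

theorem frob_quasi_optimal_sketched_LRA_general {n d s : ℕ} (k : ℕ)
    (X : Matrix (Fin n) (Fin d) ℝ) (Q : Matrix (Fin n) (Fin s) ℝ)
    (hQ : Qᵀ * Q = 1)
    (Yhat : Matrix (Fin s) (Fin d) ℝ)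
    (hYbest : ∀ Z : Matrix (Fin s) (Fin d) ℝ, Z.rank ≤ k →
      frobNorm (Qᵀ * X - Yhat) ≤ frobNorm (Qᵀ * X - Z)) :
    ∀ Z : Matrix (Fin s) (Fin d) ℝ, Z.rank ≤ k →
      frobNorm (X - Q * Yhat) ≤ frobNorm (X - Q * Z) := by
  intro Z hZ
  rw [← sq_le_sq₀ (frobNorm_nonneg _) (frobNorm_nonneg _), frobNorm_sub_mul_sq hQ X Yhat,
    frobNorm_sub_mul_sq hQ X Z]
  have hbest := hYbest Z hZ
  gcongr
  exact frobNorm_nonneg _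

/-- Theorem 1 of the paper: if `Q` has orthonormal columns and `Ŷ` is a best rank-`k`
approximation of `Qᵀ * X`, then `Q * Ŷ` is the quasi-optimal rank-`k` approximation of `X`
within the subspace spanned by `Q`. -/
theorem frob_quasi_optimal_sketched_LRA {n d s : ℕ} (k : ℕ)
    (X : Matrix (Fin n) (Fin d) ℝ) (Q : Matrix (Fin n) (Fin s) ℝ)
    (hQ : Qᵀ * Q = 1)
    (Yhat : Matrix (Fin s) (Fin d) ℝ)
    (hYrank : Yhat.rank ≤ k)
    (hYbest : ∀ Z : Matrix (Fin s) (Fin d) ℝ, Z.rank ≤ k →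
      frobNorm (Qᵀ * X - Yhat) ≤ frobNorm (Qᵀ * X - Z)) :
    ∀ Z : Matrix (Fin s) (Fin d) ℝ, Z.rank ≤ k →
      frobNorm (X - Q * Yhat) ≤ frobNorm (X - Q * Z) :=
  frob_quasi_optimal_sketched_LRA_general k X Q hQ Yhat hYbest
end

section
/- (Eckart–Young, Lemma 1 of the paper, projection form.) Let A ∈ ℝ^{n×d}, and let u₁, …, uₙ ∈ ℝⁿ be an orthonormal eigenbasis of the symmetric matrix AAᵀ with corresponding eigenvalues λ₁ ≥ λ₂ ≥ ⋯ ≥ λₙ arranged in non-increasing order. For k ≤ n let U_k ∈ ℝ^{n×k} be the matrix whose columns are u₁, …, u_k. Then for every matrix Z ∈ ℝ^{n×d} with rank(Z) ≤ k, ‖A − U_k U_kᵀ A‖_F ≤ ‖A − Z‖_F; that is, projecting A onto the span of its top-k left singular vectors gives an optimal rank-k approximation in Frobenius norm. -/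
open Matrix

/-!
Let the rows of `W` be an orthonormal basis of the column space `V` of `Z`, so `dim V ≤ k`.
Among matrices with columns in `V`, the projection `Wᵀ W A` is closest to `A`, and by Pythagoras
`‖A - Wᵀ W A‖² = ‖A‖² - tr (W A Aᵀ Wᵀ)`. Writing `A Aᵀ = Qᵀ diag(λ) Q` with the rows of `Q` the
eigenvectors `uᵢ`, the trace equals `∑ λᵢ tᵢ` with weights `tᵢ = ‖W uᵢ‖² ∈ [0, 1]` of total
mass `dim V ≤ k`; since the `λᵢ` are non-negative and decreasing this is at most
`λ₁ + ⋯ + λₖ`, which is exactly the value for `W = U_kᵀ`.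
-/

open Finset

theorem Finset.sum_mul_le_sum_of_threshold {ι : Type*} [Fintype ι] (s : Finset ι)
    {lam t : ι → ℝ} {μ : ℝ} (hμ : 0 ≤ μ) (h_mem : ∀ i ∈ s, μ ≤ lam i)
    (h_not_mem : ∀ i ∉ s, lam i ≤ μ) (ht₀ : ∀ i, 0 ≤ t i) (ht₁ : ∀ i, t i ≤ 1)
    (ht : ∑ i, t i ≤ #s) :
    ∑ i, lam i * t i ≤ ∑ i ∈ s, lam i := by
  classical
  have key : ∑ i, lam i * t i - ∑ i ∈ s, lam i
      = ∑ i, (lam i - μ) * (t i - if i ∈ s then 1 else 0) + μ * (∑ i, t i - #s) := by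
    simp only [mul_sub, sub_mul, sum_sub_distrib, mul_ite, mul_one, mul_zero, sum_ite_mem,
      univ_inter, ← mul_sum, sum_const, nsmul_eq_mul]
    ring
  have h_terms : ∑ i, (lam i - μ) * (t i - if i ∈ s then 1 else 0) ≤ 0 :=
    sum_nonpos fun i _ => by
      split_ifs with hi
      · nlinarith [h_mem i hi, ht₁ i]
      · nlinarith [h_not_mem i hi, ht₀ i]
  have h_mass : μ * (∑ i, t i - #s) ≤ 0 := mul_nonpos_of_nonneg_of_nonpos hμ (by linarith)
  linarith

namespace Matrix

variable {m n o R : Type*} [Fintype m] [Fintype n] [Fintype o]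

theorem trace_mul_transpose_self_eq_sum_sq [CommRing R] (M : Matrix m n R) :
    trace (M * Mᵀ) = ∑ i, ∑ j, M i j ^ 2 := by
  simp only [trace, diag_apply, mul_apply, transpose_apply, sq]

theorem trace_mul_transpose_self_nonneg (M : Matrix m n ℝ) : 0 ≤ trace (M * Mᵀ) := by
  rw [trace_mul_transpose_self_eq_sum_sq]
  positivity

section OrthonormalRows

variable [DecidableEq m]

theorem trace_transpose_mul_mul_transpose_self [CommRing R] {W : Matrix m n R}
    (hW : W * Wᵀ = 1) (C : Matrix m o R) :
    trace (Wᵀ * C * (Wᵀ * C)ᵀ) = trace (C * Cᵀ) := by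
  rw [transpose_mul, transpose_transpose, Matrix.mul_assoc, trace_mul_comm, Matrix.mul_assoc,
    Matrix.mul_assoc, hW, Matrix.mul_one]

/-- Pythagoras for the projection `Wᵀ * W` onto the row space of `W`, with the squared
Frobenius norm written as `trace (M * Mᵀ)`. -/
theorem trace_sub_transpose_mul_sq [CommRing R] {W : Matrix m n R} (hW : W * Wᵀ = 1)
    (A : Matrix n o R) (B : Matrix m o R) :
    trace ((A - Wᵀ * B) * (A - Wᵀ * B)ᵀ) =
      trace ((A - Wᵀ * W * A) * (A - Wᵀ * W * A)ᵀ) + trace ((W * A - B) * (W * A - B)ᵀ) := by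
  set X := A - Wᵀ * W * A
  have hWX : W * X = 0 := by
    rw [Matrix.mul_sub, ← Matrix.mul_assoc, ← Matrix.mul_assoc, hW, Matrix.one_mul, sub_self]
  have hcross : trace (X * (Wᵀ * (W * A - B))ᵀ) = 0 := by
    rw [transpose_mul, transpose_transpose, ← Matrix.mul_assoc, trace_mul_comm,
      ← Matrix.mul_assoc, hWX, Matrix.zero_mul, trace_zero]
  have hsplit : A - Wᵀ * B = X + Wᵀ * (W * A - B) := by
    simp only [X, Matrix.mul_sub, ← Matrix.mul_assoc]
    abel
  rw [hsplit, transpose_add, Matrix.add_mul, Matrix.mul_add, Matrix.mul_add, trace_add, trace_add,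
    trace_add, hcross, ← trace_transpose (Wᵀ * _ * Xᵀ), transpose_mul, transpose_transpose, hcross,
    trace_transpose_mul_mul_transpose_self hW]
  ring

theorem trace_sub_transpose_mul_mul_sq [CommRing R] {W : Matrix m n R} (hW : W * Wᵀ = 1)
    (A : Matrix n o R) :
    trace ((A - Wᵀ * W * A) * (A - Wᵀ * W * A)ᵀ) = trace (A * Aᵀ) - trace (W * (A * Aᵀ) * Wᵀ) := by
  have := trace_sub_transpose_mul_sq hW A 0
  simp only [Matrix.mul_zero, sub_zero, transpose_mul, Matrix.mul_assoc] at this ⊢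
  rw [this]
  ring

theorem trace_sub_transpose_mul_mul_sq_le {W : Matrix m n ℝ} (hW : W * Wᵀ = 1)
    (A : Matrix n o ℝ) (B : Matrix m o ℝ) :
    trace ((A - Wᵀ * W * A) * (A - Wᵀ * W * A)ᵀ) ≤ trace ((A - Wᵀ * B) * (A - Wᵀ * B)ᵀ) := by
  rw [trace_sub_transpose_mul_sq hW A B]
  exact le_add_of_nonneg_right (trace_mul_transpose_self_nonneg _)

theorem sum_sq_le_one_of_mul_transpose_eq_one {P : Matrix m n ℝ} (hP : P * Pᵀ = 1) (i : n) :
    ∑ l, P l i ^ 2 ≤ 1 := by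
  set G := Pᵀ * P
  have hG : G * G = G := by
    rw [Matrix.mul_assoc, ← Matrix.mul_assoc P, hP, Matrix.one_mul]
  have hGii : G i i = ∑ l, P l i ^ 2 := by simp only [G, mul_apply, transpose_apply, sq]
  have hG_symm : ∀ j, G j i = G i j := fun j => by
    simp only [G, mul_apply, transpose_apply, mul_comm]
  have hsq : G i i ^ 2 ≤ G i i :=
    calc G i i ^ 2 ≤ ∑ j, G i j ^ 2 := single_le_sum (fun j _ => sq_nonneg (G i j)) (mem_univ i)
      _ = G i i := by
        conv_rhs => rw [← hG, mul_apply]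
        exact sum_congr rfl fun j _ => by rw [hG_symm, sq]
  have hnonneg : 0 ≤ G i i := hGii ▸ sum_nonneg fun l _ => sq_nonneg _
  nlinarith

end OrthonormalRows

theorem exists_mul_transpose_eq_one_and_transpose_mul_mul_eq [DecidableEq o]
    (Z : Matrix n o ℝ) :
    ∃ W : Matrix (Fin Z.rank) n ℝ, W * Wᵀ = 1 ∧ Wᵀ * (W * Z) = Z := by
  classical
  set V := LinearMap.range (toEuclideanLin Z)
  have hV : Module.finrank ℝ V = Z.rank :=
    (rank_eq_finrank_range_toLin Z (EuclideanSpace.basisFun n ℝ).toBasis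
      (EuclideanSpace.basisFun o ℝ).toBasis).symm
  let b : OrthonormalBasis (Fin Z.rank) ℝ V := (stdOrthonormalBasis ℝ V).reindex (finCongr hV)
  refine ⟨of fun l p => (b l : EuclideanSpace ℝ n) p, ?_, ?_⟩
  · ext l l'
    have := orthonormal_iff_ite.mp b.orthonormal l l'
    simp only [Submodule.coe_inner, PiLp.inner_apply, RCLike.inner_apply, conj_trivial] at this
    rw [mul_apply, one_apply, ← this]
    exact sum_congr rfl fun _ _ => mul_comm _ _
  · ext p j
    let z : V := ⟨toEuclideanLin Z (EuclideanSpace.single j 1), LinearMap.mem_range_self _ _⟩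
    have hz := congrArg (fun x : V => (x : EuclideanSpace ℝ n) p) (b.sum_repr' z)
    simp only [z, Submodule.coe_sum, Submodule.coe_smul, Submodule.coe_inner, PiLp.inner_apply,
      RCLike.inner_apply, conj_trivial, ofLp_toLpLin, toLin'_apply, PiLp.ofLp_single,
      mulVec_single_one, WithLp.ofLp_sum, WithLp.ofLp_smul, Finset.sum_apply, Pi.smul_apply,
      smul_eq_mul, col_apply] at hz
    rw [← hz]
    simp only [mul_apply, transpose_apply, of_apply]
    refine sum_congr rfl fun l _ => ?_
    rw [mul_comm]
    exact congrArg (· * _) (sum_congr rfl fun q _ => mul_comm _ _)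

section Eigenvectors

variable [CommRing R] {M : Matrix n n R}

theorem mul_transpose_eq_transpose_mul_diagonal_of_mulVec_eq_smul [DecidableEq o]
    {W : Matrix o n R} {d : o → R} (hM : ∀ l, M *ᵥ W l = d l • W l) :
    M * Wᵀ = Wᵀ * diagonal d := by
  ext p l
  rw [mul_diagonal, mul_comm]
  simpa [mul_apply, mulVec, dotProduct] using congrFun (hM l) p

theorem eq_transpose_mul_diagonal_mul_of_mulVec_eq_smul [DecidableEq n] {Q : Matrix n n R}
    {d : n → R} (hQ : Q * Qᵀ = 1) (hM : ∀ i, M *ᵥ Q i = d i • Q i) :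
    M = Qᵀ * diagonal d * Q := by
  rw [← mul_transpose_eq_transpose_mul_diagonal_of_mulVec_eq_smul hM, Matrix.mul_assoc,
    mul_eq_one_comm.mp hQ, Matrix.mul_one]

theorem trace_mul_mul_transpose_of_mulVec_eq_smul [DecidableEq o] {W : Matrix o n R}
    {d : o → R} (hW : W * Wᵀ = 1) (hM : ∀ l, M *ᵥ W l = d l • W l) :
    trace (W * M * Wᵀ) = ∑ l, d l := by
  rw [Matrix.mul_assoc, mul_transpose_eq_transpose_mul_diagonal_of_mulVec_eq_smul hM,
    ← Matrix.mul_assoc, hW, Matrix.one_mul, trace_diagonal]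

end Eigenvectors

theorem nonneg_of_mul_transpose_mulVec_eq_smul {A : Matrix n o ℝ} {v : n → ℝ} {μ : ℝ}
    (hv : v ⬝ᵥ v = 1) (h : (A * Aᵀ) *ᵥ v = μ • v) : 0 ≤ μ := by
  have := (posSemidef_self_mul_conjTranspose A).dotProduct_mulVec_nonneg v
  rwa [conjTranspose_eq_transpose_of_trivial, h, star_trivial, dotProduct_smul, hv, smul_eq_mul,
    mul_one] at this

theorem trace_mul_diagonal_mul_transpose [CommRing R] [DecidableEq n] (P : Matrix m n R)
    (d : n → R) : trace (P * diagonal d * Pᵀ) = ∑ i, d i * ∑ l, P l i ^ 2 := by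
  simp only [trace, diag_apply, mul_apply, transpose_apply, diagonal_apply, mul_ite, mul_zero,
    sum_ite_eq', mem_univ, if_true, mul_sum]
  rw [sum_comm]
  exact sum_congr rfl fun i _ => sum_congr rfl fun l _ => by ring

theorem trace_mul_diagonal_mul_transpose_le_sum [DecidableEq m] {n k : ℕ} (hk : k ≤ n)
    {lam : Fin n → ℝ} (h_anti : Antitone lam) (h_nonneg : ∀ i, 0 ≤ lam i)
    {P : Matrix m (Fin n) ℝ} (hP : P * Pᵀ = 1) (hm : Fintype.card m ≤ k) :
    trace (P * diagonal lam * Pᵀ) ≤ ∑ i : Fin k, lam (Fin.castLE hk i) := by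
  set s := univ.map (Fin.castLEEmb hk)
  have hs : ∀ i, i ∈ s ↔ (i : ℕ) < k := fun i => by
    simp only [s, mem_map, mem_univ, true_and, Fin.coe_castLEEmb]
    exact ⟨fun ⟨a, ha⟩ => ha ▸ a.isLt, fun h => ⟨⟨i, h⟩, rfl⟩⟩
  rw [trace_mul_diagonal_mul_transpose, show ∑ i : Fin k, lam (Fin.castLE hk i) = ∑ i ∈ s, lam i
    from (sum_map univ (Fin.castLEEmb hk) lam).symm]
  refine sum_mul_le_sum_of_threshold s (μ := if h : k < n then lam ⟨k, h⟩ else 0) ?_ ?_ ?_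
    (fun i => sum_nonneg fun _ _ => sq_nonneg _) (sum_sq_le_one_of_mul_transpose_eq_one hP) ?_
  · split_ifs
    exacts [h_nonneg _, le_rfl]
  · intro i hi
    split_ifs with h
    · exact h_anti (Fin.le_def.mpr ((hs i).1 hi).le)
    · exact h_nonneg i
  · intro i hi
    have hki : k ≤ i := by simpa [hs] using hi
    rw [dif_pos (by omega)]
    exact h_anti (Fin.le_def.mpr hki)
  · calc ∑ i, ∑ l, P l i ^ 2 = trace (P * Pᵀ) := by
          rw [trace_mul_transpose_self_eq_sum_sq, sum_comm]
      _ = Fintype.card m := by rw [hP, trace_one]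
      _ ≤ k := by exact_mod_cast hm
      _ = #s := by simp [s]

theorem trace_mul_mul_transpose_le_sum_of_mulVec_eq_smul [DecidableEq m] {n k : ℕ} (hk : k ≤ n)
    {M Q : Matrix (Fin n) (Fin n) ℝ} {lam : Fin n → ℝ} (hQ : Q * Qᵀ = 1)
    (hM : ∀ i, M *ᵥ Q i = lam i • Q i) (h_anti : Antitone lam) (h_nonneg : ∀ i, 0 ≤ lam i)
    {W : Matrix m (Fin n) ℝ} (hW : W * Wᵀ = 1) (hm : Fintype.card m ≤ k) :
    trace (W * M * Wᵀ) ≤ ∑ i : Fin k, lam (Fin.castLE hk i) := by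
  have hP : W * Qᵀ * (W * Qᵀ)ᵀ = 1 := by
    rw [transpose_mul, transpose_transpose, Matrix.mul_assoc, ← Matrix.mul_assoc Qᵀ,
      mul_eq_one_comm.mp hQ, Matrix.one_mul, hW]
  calc trace (W * M * Wᵀ) = trace (W * Qᵀ * diagonal lam * (W * Qᵀ)ᵀ) := by
        rw [eq_transpose_mul_diagonal_mul_of_mulVec_eq_smul hQ hM]
        simp only [transpose_mul, transpose_transpose, Matrix.mul_assoc]
    _ ≤ _ := trace_mul_diagonal_mul_transpose_le_sum hk h_anti h_nonneg hP hm

end Matrix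

theorem frobNorm_eq_sqrt_trace {m n : Type*} [Fintype m] [Fintype n] (M : Matrix m n ℝ) :
    frobNorm M = √(trace (M * Mᵀ)) := by
  rw [trace_mul_transpose_self_eq_sum_sq, frobNorm]

/-- Eckart–Young theorem, projection form: projecting `A` onto the span of orthonormal
eigenvectors of `A * Aᵀ` for its `k` largest eigenvalues gives an optimal rank-`k`
approximation in Frobenius norm. -/
theorem eckart_young_projection {n d : ℕ}
    (A : Matrix (Fin n) (Fin d) ℝ)
    (u : Fin n → (Fin n → ℝ)) (lam : Fin n → ℝ)
    (h_orthonormal : ∀ i j : Fin n, dotProduct (u i) (u j) = if i = j then 1 else 0)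
    (h_eigen : ∀ i : Fin n, (A * Aᵀ) *ᵥ u i = lam i • u i)
    (h_decr : ∀ i j : Fin n, i ≤ j → lam j ≤ lam i)
    (k : ℕ) (hk : k ≤ n)
    (Uk : Matrix (Fin n) (Fin k) ℝ)
    (hUk : ∀ (i : Fin n) (j : Fin k), Uk i j = u (Fin.castLE hk j) i) :
    ∀ Z : Matrix (Fin n) (Fin d) ℝ, Z.rank ≤ k →
      frobNorm (A - Uk * Ukᵀ * A) ≤ frobNorm (A - Z) := by
  intro Z hZ
  obtain ⟨W, hW, hWZ⟩ := exists_mul_transpose_eq_one_and_transpose_mul_mul_eq Z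
  set Q : Matrix (Fin n) (Fin n) ℝ := of u
  have hQ : Q * Qᵀ = 1 := by
    ext i j
    exact h_orthonormal i j
  have hUkQ : Ukᵀ = Q.submatrix (Fin.castLE hk) id := by
    ext l i
    exact hUk i l
  have hUk_orth : Ukᵀ * Ukᵀᵀ = 1 := by
    rw [hUkQ, transpose_submatrix, ← submatrix_mul _ _ _ _ _ Function.bijective_id, hQ,
      submatrix_one _ (Fin.castLE_injective hk)]
  have hlam (i : Fin n) : 0 ≤ lam i :=
    nonneg_of_mul_transpose_mulVec_eq_smul ((h_orthonormal i i).trans (if_pos rfl)) (h_eigen i)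
  have h_top : trace (Ukᵀ * (A * Aᵀ) * Ukᵀᵀ) = ∑ l, lam (Fin.castLE hk l) :=
    trace_mul_mul_transpose_of_mulVec_eq_smul hUk_orth fun l => by
      rw [hUkQ]
      exact h_eigen _
  have h_other : trace (W * (A * Aᵀ) * Wᵀ) ≤ ∑ l, lam (Fin.castLE hk l) :=
    trace_mul_mul_transpose_le_sum_of_mulVec_eq_smul hk hQ h_eigen h_decr hlam hW
      ((Fintype.card_fin _).trans_le hZ)
  rw [frobNorm_eq_sqrt_trace, frobNorm_eq_sqrt_trace, ← hWZ]
  refine Real.sqrt_le_sqrt ?_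
  calc trace ((A - Uk * Ukᵀ * A) * (A - Uk * Ukᵀ * A)ᵀ)
      = trace (A * Aᵀ) - trace (Ukᵀ * (A * Aᵀ) * Ukᵀᵀ) := by
        simpa only [transpose_transpose] using trace_sub_transpose_mul_mul_sq hUk_orth A
    _ ≤ trace (A * Aᵀ) - trace (W * (A * Aᵀ) * Wᵀ) := by linarith
    _ = trace ((A - Wᵀ * W * A) * (A - Wᵀ * W * A)ᵀ) := (trace_sub_transpose_mul_mul_sq hW A).symm
    _ ≤ _ := trace_sub_transpose_mul_mul_sq_le hW A (W * Z)
end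

section
/- (Corollary of Theorem 2 stated in the paper: (1+ε) quasi-optimality of the sketched approximation.) Let X, X̃ ∈ ℝ^{n×d}, let k be a natural number, and let α ≥ 0 with ‖X − X̃‖_F ≤ α. Suppose X_k is a best rank-k approximation of X with β = ‖X − X_k‖_F > 0, and X̃_k is a best rank-k approximation of X̃. If ε ≥ 0 satisfies sqrt(1+ε) − 1 = 2α/β, then ‖X − X̃_k‖_F² ≤ (1+ε)·‖X − X_k‖_F²; in particular, an accurate sketch (α ≈ 0) yields a (1+ε) quasi-optimal rank-k approximation with ε small. -/
/-!
Compare `X̃_k` with the optimal `X_k` through `X̃`: by the triangle inequality and the optimality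
of `X̃_k` for `X̃`,
`‖X - X̃_k‖ ≤ ‖X - X̃‖ + ‖X̃ - X̃_k‖ ≤ ‖X - X̃‖ + ‖X̃ - X_k‖ ≤ 2α + β = sqrt (1 + ε) β`,
and squaring gives the claim.
-/

open Matrix

theorem dist_le_two_mul_dist_add_of_dist_le {P : Type*} [PseudoMetricSpace P] {x x' y y' : P}
    (hnearer : dist x' y' ≤ dist x' y) : dist x y' ≤ 2 * dist x x' + dist x y := by
  have hx'y : dist x' y ≤ dist x x' + dist x y := dist_triangle_left x' y x
  linarith [dist_triangle x x' y']

attribute [local instance] Matrix.frobeniusSeminormedAddCommGroup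

theorem frobNorm_sub_eq_dist {m n : Type*} [Fintype m] [Fintype n] (A B : Matrix m n ℝ) :
    frobNorm (A - B) = dist A B := by
  rw [dist_eq_norm, frobenius_norm_def, frobNorm, Real.sqrt_eq_rpow]
  simp only [Real.rpow_two, Real.norm_eq_abs, sq_abs, Matrix.sub_apply]

theorem sketched_LRA_quasi_optimal_general {n d : ℕ} (k : ℕ)
    (X Xt : Matrix (Fin n) (Fin d) ℝ)
    (α : ℝ) (hsketch : frobNorm (X - Xt) ≤ α)
    (Xk : Matrix (Fin n) (Fin d) ℝ)
    (hXk_rank : Xk.rank ≤ k)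
    (β : ℝ) (hβ : β = frobNorm (X - Xk)) (hβpos : 0 < β)
    (Xtk : Matrix (Fin n) (Fin d) ℝ)
    (hXtk_best : ∀ Z : Matrix (Fin n) (Fin d) ℝ, Z.rank ≤ k →
      frobNorm (Xt - Xtk) ≤ frobNorm (Xt - Z))
    (ε : ℝ) (hε : 0 ≤ ε) (hεeq : Real.sqrt (1 + ε) - 1 = 2 * α / β) :
    frobNorm (X - Xtk) ^ 2 ≤ (1 + ε) * frobNorm (X - Xk) ^ 2 := by
  simp only [frobNorm_sub_eq_dist] at *
  subst hβ
  have hperturb : dist X Xtk ≤ 2 * α + dist X Xk := by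
    linarith [dist_le_two_mul_dist_add_of_dist_le (x := X) (hXtk_best Xk hXk_rank)]
  have hratio : dist X Xtk / dist X Xk ≤ Real.sqrt (1 + ε) := by
    rw [div_le_iff₀ hβpos, sub_eq_iff_eq_add.mp hεeq, add_mul, div_mul_cancel₀ _ hβpos.ne']
    linarith
  have hsq := (Real.le_sqrt (div_nonneg dist_nonneg hβpos.le) (by linarith)).mp hratio
  rwa [div_pow, div_le_iff₀ (by positivity)] at hsq

/-- Corollary of Theorem 2 of the paper: the sketched best rank-`k` approximation is
`(1+ε)` quasi-optimal, where `sqrt (1+ε) − 1 = 2α/β`. -/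
theorem sketched_LRA_quasi_optimal {n d : ℕ} (k : ℕ)
    (X Xt : Matrix (Fin n) (Fin d) ℝ)
    (α : ℝ) (hα : 0 ≤ α) (hsketch : frobNorm (X - Xt) ≤ α)
    (Xk : Matrix (Fin n) (Fin d) ℝ)
    (hXk_rank : Xk.rank ≤ k)
    (hXk_best : ∀ Z : Matrix (Fin n) (Fin d) ℝ, Z.rank ≤ k →
      frobNorm (X - Xk) ≤ frobNorm (X - Z))
    (β : ℝ) (hβ : β = frobNorm (X - Xk)) (hβpos : 0 < β)
    (Xtk : Matrix (Fin n) (Fin d) ℝ)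
    (hXtk_rank : Xtk.rank ≤ k)
    (hXtk_best : ∀ Z : Matrix (Fin n) (Fin d) ℝ, Z.rank ≤ k →
      frobNorm (Xt - Xtk) ≤ frobNorm (Xt - Z))
    (ε : ℝ) (hε : 0 ≤ ε) (hεeq : Real.sqrt (1 + ε) - 1 = 2 * α / β) :
    frobNorm (X - Xtk) ^ 2 ≤ (1 + ε) * frobNorm (X - Xk) ^ 2 :=
  sketched_LRA_quasi_optimal_general k X Xt α hsketch Xk hXk_rank β hβ hβpos Xtk hXtk_best ε hε hεeq
end
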